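/- For every p ∈ (1,∞) there exists δ = δ(p) > 0 such that for all weights w, σ on ℝ with [w,σ]_{A_p,D} < ∞ and with strong dyadic smoothness constants S^{sd}_w ≤ 1+δ and S^{sd}_σ ≤ 1+δ, one has [w,σ]_{A_p} ≤ (5/4)·[w,σ]_{A_p,D}. -/

import Mathlib

open MeasureTheory Set Filter Topology

/-- Average of `w` over the interval `[a, b)`. -/
noncomputable def avgOn (w : ℝ → ℝ) (a b : ℝ) : ℝ :=
  (b - a)⁻¹ * ∫ x in Set.Ico a b, w x

/-- A weight on `ℝ`: measurable, locally integrable, a.e. positive. -/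
def IsWeight (w : ℝ → ℝ) : Prop :=
  Measurable w ∧ MeasureTheory.LocallyIntegrable w ∧ ∀ᵐ x ∂(volume : Measure ℝ), 0 < w x

/-- Average of `w` over the dyadic interval `[k 2^n, (k+1) 2^n)`. -/
noncomputable def dyadAvg (w : ℝ → ℝ) (n k : ℤ) : ℝ :=
  avgOn w ((k : ℝ) * (2 : ℝ) ^ n) (((k : ℝ) + 1) * (2 : ℝ) ^ n)

/-- The strong dyadic smoothness constant of `w` is at most `S`. -/
def StrongDyadSmoothLE (w : ℝ → ℝ) (S : ℝ) : Prop :=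
  ∀ n k : ℤ, dyadAvg w n k ≤ S * dyadAvg w n (k + 1) ∧
    dyadAvg w n (k + 1) ≤ S * dyadAvg w n k

/-- The set of values `⟨w⟩_I ⟨σ⟩_I^{p-1}` over all dyadic intervals `I`;
its supremum is the joint dyadic Muckenhoupt characteristic `[w,σ]_{A_p,D}`. -/
noncomputable def dyadApSet (p : ℝ) (w σ : ℝ → ℝ) : Set ℝ :=
  {c | ∃ n k : ℤ, c = dyadAvg w n k * (dyadAvg σ n k) ^ (p - 1)}

/-! Averages of a smooth weight over `[a, b)` are controlled by a single dyadic average.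
Choose the dyadic scale `2^n` with `N 2^n ≤ b - a < 2 N 2^n` and cover `[a, b)` by the at most
`2N + 2` consecutive dyadic intervals of that length starting at the one containing `a`. Each of
them has average at most `S^{2N}` times the first one, and the overshoot of the cover is at most
two intervals, so `⟨w⟩_{[a,b)} ≤ (1 + 2/N) S^{2N} ⟨w⟩_I` with the same dyadic `I` for `w` and `σ`.
Taking `N` large and then `S` close to `1` makes this factor as close to `1` as needed. -/

lemma IsWeight.ae_nonneg {w : ℝ → ℝ} (hw : IsWeight w) : 0 ≤ᵐ[volume] w :=
  hw.2.2.mono fun _ hx => hx.le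

lemma MeasureTheory.LocallyIntegrable.integrableOn_Ico {w : ℝ → ℝ} (hw : LocallyIntegrable w)
    (a b : ℝ) :
    IntegrableOn w (Ico a b) :=
  (hw.integrableOn_isCompact isCompact_Icc).mono_set Ico_subset_Icc_self

lemma exists_Ico_subset_Ico_floor_mul {a b s : ℝ} (hab : a ≤ b) (hs : 0 < s) :
    ∃ m : ℕ, Ico a b ⊆ Ico (⌊a / s⌋ * s) ((⌊a / s⌋ + m) * s) ∧ m * s < b - a + 2 * s := by
  set k := ⌊a / s⌋
  have hka : k * s ≤ a := (le_div_iff₀ hs).1 (Int.floor_le _)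
  have hak : a < (k + 1) * s := (div_lt_iff₀ hs).1 (Int.lt_floor_add_one _)
  have hkb : 0 ≤ b / s - k := sub_nonneg.2 ((le_div_iff₀ hs).2 (hka.trans hab))
  refine ⟨⌈b / s - k⌉₊, Ico_subset_Ico hka ?_, ?_⟩
  · have := Nat.le_ceil (b / s - k)
    rw [← div_le_iff₀ hs]
    linarith
  · have := Nat.ceil_lt_add_one hkb
    have hb : b / s * s = b := div_mul_cancel₀ b hs.ne'
    nlinarith

section
variable {w : ℝ → ℝ}

lemma avgOn_nonneg (hw : 0 ≤ᵐ[volume] w) {a b : ℝ} (hab : a ≤ b) : 0 ≤ avgOn w a b :=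
  mul_nonneg (inv_nonneg.2 (sub_nonneg.2 hab)) (integral_nonneg_of_ae (ae_restrict_of_ae hw))

lemma dyadAvg_nonneg (hw : 0 ≤ᵐ[volume] w) (n k : ℤ) : 0 ≤ dyadAvg w n k :=
  avgOn_nonneg hw (by gcongr; linarith)

lemma setIntegral_Ico_eq_zpow_mul_dyadAvg (w : ℝ → ℝ) (n k : ℤ) :
    ∫ x in Ico ((k : ℝ) * 2 ^ n) ((k + 1) * 2 ^ n), w x = 2 ^ n * dyadAvg w n k := by
  rw [dyadAvg, avgOn, show ((k : ℝ) + 1) * 2 ^ n - k * 2 ^ n = 2 ^ n by ring,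
    mul_inv_cancel_left₀ (by positivity)]

lemma setIntegral_Ico_eq_zpow_mul_sum_dyadAvg (hw : LocallyIntegrable w) (n k : ℤ) (m : ℕ) :
    ∫ x in Ico ((k : ℝ) * 2 ^ n) ((k + m) * 2 ^ n), w x
      = 2 ^ n * ∑ i ∈ Finset.range m, dyadAvg w n (k + i) := by
  induction m with
  | zero => simp
  | succ m ih =>
    have h₁ : (k : ℝ) * 2 ^ n ≤ (k + m) * 2 ^ n := by gcongr; simp
    have h₂ : ((k : ℝ) + m) * 2 ^ n ≤ (k + (m + 1 : ℕ)) * 2 ^ n := by gcongr; simp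
    rw [← Ico_union_Ico_eq_Ico h₁ h₂, setIntegral_union Ico_disjoint_Ico_same measurableSet_Ico
      (hw.integrableOn_Ico _ _) (hw.integrableOn_Ico _ _), ih, Finset.sum_range_succ, mul_add]
    have hlast := setIntegral_Ico_eq_zpow_mul_dyadAvg w n (k + m)
    push_cast at hlast
    rw [show ((k : ℝ) + (m + 1 : ℕ)) = k + m + 1 by push_cast; ring, hlast]

lemma dyadAvg_add_le_pow_mul {S : ℝ} (hS : 0 ≤ S) (hsm : StrongDyadSmoothLE w S)
    (n k : ℤ) (i : ℕ) : dyadAvg w n (k + i) ≤ S ^ i * dyadAvg w n k := by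
  induction i with
  | zero => simp
  | succ i ih =>
    calc dyadAvg w n (k + (i + 1 : ℕ)) = dyadAvg w n (k + i + 1) := by push_cast; ring_nf
      _ ≤ S * dyadAvg w n (k + i) := (hsm n (k + i)).2
      _ ≤ S * (S ^ i * dyadAvg w n k) := by gcongr
      _ = S ^ (i + 1) * dyadAvg w n k := by ring

lemma sum_dyadAvg_le (hw : 0 ≤ᵐ[volume] w) {S : ℝ} (hS : 1 ≤ S) (hsm : StrongDyadSmoothLE w S)
    (n k : ℤ) {m M : ℕ} (hmM : m ≤ M + 1) :
    ∑ i ∈ Finset.range m, dyadAvg w n (k + i) ≤ m * (S ^ M * dyadAvg w n k) := by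
  calc ∑ i ∈ Finset.range m, dyadAvg w n (k + i)
      ≤ ∑ _i ∈ Finset.range m, S ^ M * dyadAvg w n k := by
        refine Finset.sum_le_sum fun i hi => ?_
        refine (dyadAvg_add_le_pow_mul (by linarith) hsm n k i).trans ?_
        have := dyadAvg_nonneg hw n k
        gcongr
        · have := Finset.mem_range.1 hi
          omega
    _ = m * (S ^ M * dyadAvg w n k) := by simp

lemma avgOn_le_dyadAvg_floor (hwi : LocallyIntegrable w) (hw0 : 0 ≤ᵐ[volume] w) {S : ℝ}
    (hS : 1 ≤ S) (hsm : StrongDyadSmoothLE w S) {N : ℕ} (hN : 0 < N) {a b : ℝ} (hab : a < b)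
    {n : ℤ} (hn : (b - a) / N ∈ Ico ((2 : ℝ) ^ n) (2 ^ (n + 1))) :
    avgOn w a b ≤ (1 + 2 / N) * S ^ (2 * N) * dyadAvg w n ⌊a / 2 ^ n⌋ := by
  set s : ℝ := 2 ^ n
  have hs : 0 < s := by positivity
  have hN' : (0 : ℝ) < N := by exact_mod_cast hN
  have hba : 0 < b - a := sub_pos.2 hab
  obtain ⟨hsN, hNs⟩ := hn
  rw [zpow_add_one₀ two_ne_zero, div_lt_iff₀ hN'] at hNs
  rw [le_div_iff₀ hN'] at hsN
  obtain ⟨m, hsub, hm⟩ := exists_Ico_subset_Ico_floor_mul hab.le hs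
  set k := ⌊a / s⌋
  have hmN : m ≤ 2 * N + 1 := by
    have : (m : ℝ) < 2 * N + 2 := by nlinarith
    exact_mod_cast Nat.lt_succ_iff.1 (by exact_mod_cast this)
  have hms : m * s ≤ (b - a) * (1 + 2 / N) := by
    have : 2 * s ≤ (b - a) * (2 / N) := by
      rw [mul_div_assoc', le_div_iff₀ hN']; linarith
    linarith
  have hd := dyadAvg_nonneg hw0 n k
  calc avgOn w a b = (b - a)⁻¹ * ∫ x in Ico a b, w x := rfl
    _ ≤ (b - a)⁻¹ * ∫ x in Ico (k * s) ((k + m) * s), w x := by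
        refine mul_le_mul_of_nonneg_left ?_ (by positivity)
        exact setIntegral_mono_set (hwi.integrableOn_Ico _ _) (ae_restrict_of_ae hw0)
          (Eventually.of_forall hsub)
    _ = (b - a)⁻¹ * (s * ∑ i ∈ Finset.range m, dyadAvg w n (k + i)) := by
        rw [setIntegral_Ico_eq_zpow_mul_sum_dyadAvg hwi]
    _ ≤ (b - a)⁻¹ * (s * (m * (S ^ (2 * N) * dyadAvg w n k))) := by
        gcongr
        exact sum_dyadAvg_le hw0 hS hsm n k hmN
    _ = (b - a)⁻¹ * (m * s) * (S ^ (2 * N) * dyadAvg w n k) := by ring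
    _ ≤ (b - a)⁻¹ * ((b - a) * (1 + 2 / N)) * (S ^ (2 * N) * dyadAvg w n k) := by gcongr
    _ = (1 + 2 / N) * S ^ (2 * N) * dyadAvg w n k := by field_simp

end

lemma exists_one_add_two_div_mul_one_add_pow_le {C : ℝ} (hC : 1 < C) :
    ∃ N : ℕ, 0 < N ∧ ∃ δ : ℝ, 0 < δ ∧ (1 + 2 / N) * (1 + δ) ^ (2 * N) ≤ C := by
  set r := √C
  have hr : 1 < r := Real.lt_sqrt_of_sq_lt (by linarith)
  obtain ⟨N, hN⟩ := exists_nat_gt (2 / (r - 1))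
  have hN' : (0 : ℝ) < N := (div_pos two_pos (sub_pos.2 hr)).trans hN
  have hNr : 1 + 2 / N ≤ r := by
    rw [div_lt_iff₀ (sub_pos.2 hr)] at hN
    rw [← le_sub_iff_add_le', div_le_iff₀ hN']
    linarith
  have hlim : Tendsto (fun δ : ℝ => (1 + δ) ^ (2 * N)) (𝓝[>] 0) (𝓝 1) :=
    (((continuous_const.add continuous_id).pow _).tendsto' 0 1 (by simp)).mono_left
      nhdsWithin_le_nhds
  obtain ⟨δ, hδr, hδ⟩ := ((hlim.eventually (ge_mem_nhds hr)).and self_mem_nhdsWithin).exists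
  refine ⟨N, by exact_mod_cast hN', δ, hδ, ?_⟩
  calc (1 + 2 / N) * (1 + δ) ^ (2 * N) ≤ r * r := by gcongr
    _ = C := Real.mul_self_sqrt (by linarith)

lemma mul_rpow_sub_one_le {p E x y d e : ℝ} (hp : 1 ≤ p) (hE : 0 < E) (hx : 0 ≤ x) (hy : 0 ≤ y)
    (he : 0 ≤ e) (hxd : x ≤ E * d) (hye : y ≤ E * e) :
    x * y ^ (p - 1) ≤ E ^ p * (d * e ^ (p - 1)) := by
  calc x * y ^ (p - 1) ≤ (E * d) * (E * e) ^ (p - 1) := by gcongr; linarith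
    _ = E ^ p * (d * e ^ (p - 1)) := by
        rw [Real.mul_rpow hE.le he, Real.rpow_sub_one hE.ne']
        field_simp

theorem statement6 (p : ℝ) (hp : 1 < p) :
    ∃ δ : ℝ, 0 < δ ∧
      ∀ w σ : ℝ → ℝ, IsWeight w → IsWeight σ →
        BddAbove (dyadApSet p w σ) →
        StrongDyadSmoothLE w (1 + δ) → StrongDyadSmoothLE σ (1 + δ) →
        ∀ a b : ℝ, a < b →
          avgOn w a b * (avgOn σ a b) ^ (p - 1) ≤ (5 / 4) * sSup (dyadApSet p w σ) := by
  have hp0 : 0 < p := one_pos.trans hp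
  obtain ⟨N, hN, δ, hδ, hE⟩ := exists_one_add_two_div_mul_one_add_pow_le
    (Real.one_lt_rpow (by norm_num : (1 : ℝ) < 5 / 4) (inv_pos.2 hp0))
  refine ⟨δ, hδ, fun w σ hw hσ hbdd hsw hsσ a b hab => ?_⟩
  obtain ⟨n, hn⟩ := exists_mem_Ico_zpow (y := (2 : ℝ))
    (div_pos (sub_pos.2 hab) (Nat.cast_pos.2 hN)) one_lt_two
  set E := (1 + 2 / (N : ℝ)) * (1 + δ) ^ (2 * N)
  set k := ⌊a / (2 : ℝ) ^ n⌋
  have hS : (1 : ℝ) ≤ 1 + δ := by linarith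
  have hE0 : 0 < E := by positivity
  have hEp : E ^ p ≤ 5 / 4 := by
    calc E ^ p ≤ ((5 / 4 : ℝ) ^ p⁻¹) ^ p := by gcongr
      _ = 5 / 4 := Real.rpow_inv_rpow (by norm_num) hp0.ne'
  calc avgOn w a b * avgOn σ a b ^ (p - 1)
      ≤ E ^ p * (dyadAvg w n k * dyadAvg σ n k ^ (p - 1)) :=
        mul_rpow_sub_one_le hp.le hE0 (avgOn_nonneg hw.ae_nonneg hab.le)
          (avgOn_nonneg hσ.ae_nonneg hab.le) (dyadAvg_nonneg hσ.ae_nonneg n k)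
          (avgOn_le_dyadAvg_floor hw.2.1 hw.ae_nonneg hS hsw hN hab hn)
          (avgOn_le_dyadAvg_floor hσ.2.1 hσ.ae_nonneg hS hsσ hN hab hn)
    _ ≤ 5 / 4 * sSup (dyadApSet p w σ) := by
        have hmem := le_csSup hbdd ⟨n, k, rfl⟩
        have := mul_nonneg (dyadAvg_nonneg hw.ae_nonneg n k)
          (Real.rpow_nonneg (dyadAvg_nonneg hσ.ae_nonneg n k) (p - 1))
        gcongr
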